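/- arXiv:2411.06432 — 3 statements merged into one kernel-verified Lean document; each statement's English description precedes it below -/
import Mathlib

section
/- Let X be a skeletally small additive category and 𝕏 = (X --f--> Y --g--> Z) a diagram in X. Define Ω_𝕏 = { M ∈ Mod-X : Ker(M(g)) ⊆ Im(M(f)) } and Γ_𝕏 = { N ∈ Mod-X^op : Ker(N(f)) ⊆ Im(N(g)) }. Then the assignment sending a definable subcategory D = ⋂_λ Ω_{𝕏_λ} of Mod-X to D̄ = ⋂_λ Γ_{𝕏_λ} of Mod-X^op is well defined (independent of the choice of defining family) and is a bijection between definable subcategories of Mod-X and definable subcategories of Mod-X^op. -/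
open CategoryTheory CategoryTheory.Limits Opposite

universe u

variable {C : Type u} [SmallCategory C] [Preadditive C]

/-- For a diagram `𝕏 = (X --f--> Y --g--> Z)` in `X`:
`Ω_𝕏 = { M ∈ Mod-X : Ker(M(g)) ⊆ Im(M(f)) }`. -/
def Omega {X Y Z : C} (f : X ⟶ Y) (g : Y ⟶ Z) (M : C ⥤ AddCommGrpCat.{u}) : Prop :=
  ∀ y : M.obj Y, M.map g y = 0 → ∃ x : M.obj X, M.map f x = y

/-- For a diagram `𝕏 = (X --f--> Y --g--> Z)` in `X`:
`Γ_𝕏 = { N ∈ Mod-X^op : Ker(N(f)) ⊆ Im(N(g)) }`. -/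
def Gamma {X Y Z : C} (f : X ⟶ Y) (g : Y ⟶ Z) (N : Cᵒᵖ ⥤ AddCommGrpCat.{u}) : Prop :=
  ∀ y : N.obj (op Y), N.map f.op y = 0 → ∃ z : N.obj (op Z), N.map g.op z = y

/-- A family of diagrams in `C`, indexed by `Λ`. -/
structure DiagramFamily (C : Type u) [SmallCategory C] where
  Λ : Type u
  X : Λ → C
  Y : Λ → C
  Z : Λ → C
  f : ∀ l, X l ⟶ Y l
  g : ∀ l, Y l ⟶ Z l

/-- The definable subcategory of `Mod-X` cut out by a family of diagrams. -/
def omegaSet (𝒳 : DiagramFamily C) : Set (C ⥤ AddCommGrpCat.{u}) :=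
  {M | M.Additive ∧ ∀ l, Omega (𝒳.f l) (𝒳.g l) M}

/-- The definable subcategory of `Mod-X^op` cut out by a family of diagrams. -/
def gammaSet (𝒳 : DiagramFamily C) : Set (Cᵒᵖ ⥤ AddCommGrpCat.{u}) :=
  {N | N.Additive ∧ ∀ l, Gamma (𝒳.f l) (𝒳.g l) N}

/-!
Take character duals `A* = Hom(A, ℚ/ℤ)`. Since `ℚ/ℤ` is an injective cogenerator of abelian
groups, `Ker k ⊆ Im h` holds for `A --h--> B --k--> C` iff `Ker h* ⊆ Im k*` holds for the dual
sequence. Applied objectwise, `M ∈ Ω_𝕏 ↔ M* ∈ Γ_𝕏` and `N ∈ Γ_𝕏 ↔ N* ∈ Ω_𝕏`. Hence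
`D̄ = {N | N* ∈ D}` depends on `D` alone, and `D = {M | M* ∈ D̄}` is recovered from `D̄`.
-/

namespace AddCommGrpCat

abbrev ratCircle : AddCommGrpCat.{u} := of (ULift.{u} (AddCircle (1 : ℚ)))

lemma exists_hom_ratCircle_apply_ne_zero {B : AddCommGrpCat.{u}} {S : AddSubgroup B} {b : B}
    (hb : b ∉ S) : ∃ ψ : B ⟶ ratCircle, (∀ s ∈ S, ψ s = 0) ∧ ψ b ≠ 0 := by
  have hb' : (b : B ⧸ S) ≠ 0 := by rwa [ne_eq, QuotientAddGroup.eq_zero_iff]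
  obtain ⟨c, hc⟩ := CharacterModule.exists_character_apply_ne_zero_of_ne_zero hb'
  let χ : B →+ AddCircle (1 : ℚ) := (c : B ⧸ S →+ _).comp (QuotientAddGroup.mk' S)
  refine ⟨ofHom (AddEquiv.ulift.symm.toAddMonoidHom.comp χ), fun s hs => ?_, ?_⟩
  · have hχ : χ s = 0 := (congrArg c ((QuotientAddGroup.eq_zero_iff s).2 hs)).trans (map_zero c)
    simp [hχ]
  · intro h
    have hχ : χ b = 0 := by simpa using h
    exact hc hχ

lemma exists_comp_eq_of_ker_le {B C : AddCommGrpCat.{u}} (k : B ⟶ C) (ψ : B ⟶ ratCircle)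
    (hψ : ∀ b, k b = 0 → ψ b = 0) : ∃ φ : C ⟶ ratCircle, k ≫ φ = ψ := by
  let r := k.hom.rangeRestrict
  let ψ' := AddMonoidHom.liftOfSurjective r k.hom.rangeRestrict_surjective
    ⟨ψ.hom, by rw [AddMonoidHom.ker_rangeRestrict]; exact hψ⟩
  let ι : of k.hom.range ⟶ C := ofHom k.hom.range.subtype
  have : Mono ι := (mono_iff_injective ι).2 Subtype.val_injective
  refine ⟨Injective.factorThru (ofHom ψ') ι, ?_⟩
  calc k ≫ Injective.factorThru (ofHom ψ') ι
      = ofHom r ≫ ι ≫ Injective.factorThru (ofHom ψ') ι := rfl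
    _ = ψ := by
      rw [Injective.comp_factorThru, ← ofHom_comp, AddMonoidHom.liftOfRightInverse_comp]
      rfl

lemma ker_le_range_iff_dual {A B C : AddCommGrpCat.{u}} (h : A ⟶ B) (k : B ⟶ C) :
    (∀ b, k b = 0 → ∃ a, h a = b) ↔
      ∀ ψ : B ⟶ ratCircle, h ≫ ψ = 0 → ∃ φ : C ⟶ ratCircle, k ≫ φ = ψ := by
  constructor
  · intro hex ψ hψ
    refine exists_comp_eq_of_ker_le k ψ fun b hb => ?_
    obtain ⟨a, rfl⟩ := hex b hb
    simpa using ConcreteCategory.congr_hom hψ a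
  · intro hdual b hb
    by_contra! hne
    obtain ⟨ψ, hψ, hψb⟩ := exists_hom_ratCircle_apply_ne_zero (S := h.hom.range) (b := b)
      fun ⟨a, ha⟩ => hne a ha
    obtain ⟨φ, rfl⟩ := hdual ψ (by ext a : 2; simpa using hψ _ ⟨a, rfl⟩)
    exact hψb (by simp [hb])

end AddCommGrpCat

abbrev characterDual : AddCommGrpCat.{u}ᵒᵖ ⥤ AddCommGrpCat.{u} :=
  preadditiveYoneda.obj AddCommGrpCat.ratCircle

omit [Preadditive C] in
lemma omega_iff_gamma_characterDual {X Y Z : C} (f : X ⟶ Y) (g : Y ⟶ Z)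
    (M : C ⥤ AddCommGrpCat.{u}) : Omega f g M ↔ Gamma f g (M.op ⋙ characterDual) :=
  AddCommGrpCat.ker_le_range_iff_dual (M.map f) (M.map g)

omit [Preadditive C] in
lemma gamma_iff_omega_characterDual {X Y Z : C} (f : X ⟶ Y) (g : Y ⟶ Z)
    (N : Cᵒᵖ ⥤ AddCommGrpCat.{u}) : Gamma f g N ↔ Omega f g (N.rightOp ⋙ characterDual) :=
  AddCommGrpCat.ker_le_range_iff_dual (N.map g.op) (N.map f.op)

lemma mem_omegaSet_iff (𝒳 : DiagramFamily C) (M : C ⥤ AddCommGrpCat.{u}) :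
    M ∈ omegaSet 𝒳 ↔ M.Additive ∧ M.op ⋙ characterDual ∈ gammaSet 𝒳 := by
  refine ⟨fun ⟨hM, hΩ⟩ => ⟨hM, inferInstance, fun l => ?_⟩, fun ⟨hM, _, hΓ⟩ => ⟨hM, fun l => ?_⟩⟩
  · exact (omega_iff_gamma_characterDual _ _ M).1 (hΩ l)
  · exact (omega_iff_gamma_characterDual _ _ M).2 (hΓ l)

lemma mem_gammaSet_iff (𝒳 : DiagramFamily C) (N : Cᵒᵖ ⥤ AddCommGrpCat.{u}) :
    N ∈ gammaSet 𝒳 ↔ N.Additive ∧ N.rightOp ⋙ characterDual ∈ omegaSet 𝒳 := by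
  refine ⟨fun ⟨hN, hΓ⟩ => ⟨hN, inferInstance, fun l => ?_⟩, fun ⟨hN, _, hΩ⟩ => ⟨hN, fun l => ?_⟩⟩
  · exact (gamma_iff_omega_characterDual _ _ N).1 (hΓ l)
  · exact (gamma_iff_omega_characterDual _ _ N).2 (hΩ l)

def definableDual (D : Set (C ⥤ AddCommGrpCat.{u})) : Set (Cᵒᵖ ⥤ AddCommGrpCat.{u}) :=
  {N | N.Additive ∧ N.rightOp ⋙ characterDual ∈ D}

lemma definableDual_omegaSet (𝒳 : DiagramFamily C) : definableDual (omegaSet 𝒳) = gammaSet 𝒳 :=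
  Set.ext fun N => (mem_gammaSet_iff 𝒳 N).symm

lemma omegaSet_eq_of_gammaSet_eq {𝒳 𝒴 : DiagramFamily C} (h : gammaSet 𝒳 = gammaSet 𝒴) :
    omegaSet 𝒳 = omegaSet 𝒴 :=
  Set.ext fun M => by rw [mem_omegaSet_iff, mem_omegaSet_iff, h]

/-- Theorem 4.5: the assignment `⋂_λ Ω_{𝕏_λ} ↦ ⋂_λ Γ_{𝕏_λ}` is
well defined (independent of the choice of defining family of diagrams) and gives a
bijection between definable subcategories of `Mod-X` and definable subcategories of
`Mod-X^op`. -/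
theorem definable_duality_bijection :
    ∃ Φ : Set (C ⥤ AddCommGrpCat.{u}) → Set (Cᵒᵖ ⥤ AddCommGrpCat.{u}),
      (∀ 𝒳 : DiagramFamily C, Φ (omegaSet 𝒳) = gammaSet 𝒳) ∧
      Set.BijOn Φ {D | ∃ 𝒳 : DiagramFamily C, D = omegaSet 𝒳}
        {D' | ∃ 𝒳 : DiagramFamily C, D' = gammaSet 𝒳} := by
  refine ⟨definableDual, definableDual_omegaSet, ?_, ?_, ?_⟩
  · rintro D ⟨𝒳, rfl⟩
    exact ⟨𝒳, definableDual_omegaSet 𝒳⟩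
  · rintro D₁ ⟨𝒳, rfl⟩ D₂ ⟨𝒴, rfl⟩ h
    rw [definableDual_omegaSet, definableDual_omegaSet] at h
    exact omegaSet_eq_of_gammaSet_eq h
  · rintro D' ⟨𝒳, rfl⟩
    exact ⟨omegaSet 𝒳, ⟨𝒳, rfl⟩, definableDual_omegaSet 𝒳⟩
end

section
/- Let X be a skeletally small exact category. Then the subcategory Ex-X of Mod-X consisting of additive functors M : X → Ab that are exact (i.e. send every admissible short exact sequence 0 → A → B → C → 0 in X to an exact sequence of abelian groups 0 → M(A) → M(B) → M(C) → 0) is a definable subcategory of Mod-X. -/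
open CategoryTheory CategoryTheory.Limits

universe u

variable {C : Type u} [SmallCategory C] [Preadditive C]

/-- A kernel-cokernel pair `A --i--> B --p--> C` in `C`; the admissible short exact
sequences of an exact structure on `C` are (a class of) such pairs. -/
structure AdmissibleSES (C : Type u) [SmallCategory C] [Preadditive C] where
  A : C
  B : C
  Cc : C
  i : A ⟶ B
  p : B ⟶ Cc
  w : i ≫ p = 0
  isKer : Nonempty (IsLimit (KernelFork.ofι i w))
  isCoker : Nonempty (IsColimit (CokernelCofork.ofπ p w))

/-- Pure monomorphisms in `Mod-X`. -/
def IsPureMono {M N : C ⥤ AddCommGrpCat.{u}} (h : M ⟶ N) : Prop :=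
  Mono h ∧ ∀ {X Y : C} (u : X ⟶ Y) (m : M.obj Y),
    (∃ n : N.obj X, N.map u n = h.app Y m) → ∃ m' : M.obj X, M.map u m' = m

/-- A class `D` of objects of `Mod-X` is definable if it consists of additive functors and
is closed under direct products, direct limits and pure subobjects. -/
def IsDefinable (D : Set (C ⥤ AddCommGrpCat.{u})) : Prop :=
  (∀ M ∈ D, M.Additive) ∧
  (∀ {ι : Type u} (M : ι → C ⥤ AddCommGrpCat.{u}), (∀ i, M i ∈ D) →
    ∀ (P : C ⥤ AddCommGrpCat.{u}), P.Additive → ∀ (π : ∀ i, P ⟶ M i),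
      Nonempty (IsLimit (Fan.mk P π)) → P ∈ D) ∧
  (∀ {J : Type u} [SmallCategory J] [IsFiltered J] (F : J ⥤ C ⥤ AddCommGrpCat.{u}),
    (∀ j, F.obj j ∈ D) → ∀ (c : Cocone F), c.pt.Additive → IsColimit c → c.pt ∈ D) ∧
  (∀ (M N : C ⥤ AddCommGrpCat.{u}) (h : M ⟶ N), M.Additive → IsPureMono h → N ∈ D → M ∈ D)

/-! Exactness of `M` on `A → B → C` only involves the groups `M A`, `M B`, `M C` and the two maps
between them, and products and filtered colimits in `Mod-X` are computed pointwise. A product of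
short exact sequences of abelian groups is short exact, and so is a filtered colimit: an element
killed in the colimit is already killed at some later stage of the system. For a pure
monomorphism `h : M ⟶ N`, the purity condition for `u : X ⟶ Y` says precisely that an element of
`M Y` whose image in `N Y` lifts along `N.map u` already lifts along `M.map u`, which is what a
diagram chase through the ladder `M(A → B → C) ⟶ N(A → B → C)` needs. -/

universe v

namespace Function

def ShortExact {α β γ : Type*} [Zero γ] (f : α → β) (g : β → γ) : Prop :=
  Injective f ∧ Exact f g ∧ Surjective g

theorem ShortExact.piMap {ι : Type*} {α β γ : ι → Type*} [∀ k, Zero (γ k)]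
    {f : ∀ k, α k → β k} {g : ∀ k, β k → γ k} (h : ∀ k, ShortExact (f k) (g k)) :
    ShortExact (Pi.map f) (Pi.map g) := by
  refine ⟨.piMap fun k => (h k).1, fun y => ?_, .piMap fun k => (h k).2.2⟩
  rw [Set.range_piMap, funext_iff]
  exact forall_congr' fun k => ((h k).2.1 (y k)).trans (by simp)

theorem ShortExact.of_pure_ladder {α β γ α' β' γ' : Type*} [Zero γ] [Zero γ']
    {f : α → β} {g : β → γ} {f' : α' → β'} {g' : β' → γ'} {a : α → α'} {b : β → β'}
    {c : γ → γ'} (h' : ShortExact f' g') (hf : ∀ x, b (f x) = f' (a x))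
    (hg : ∀ y, c (g y) = g' (b y)) (ha : Injective a) (hc : Injective c) (hc0 : c 0 = 0)
    (hb_pure : ∀ y, b y ∈ Set.range f' → y ∈ Set.range f)
    (hc_pure : ∀ z, c z ∈ Set.range g' → z ∈ Set.range g) :
    ShortExact f g := by
  refine ⟨.of_comp (f := b) ?_, fun y => ⟨fun hy => hb_pure y ?_, ?_⟩,
    fun z => hc_pure z (h'.2.2 _)⟩
  · rw [show b ∘ f = f' ∘ a from funext hf]
    exact h'.1.comp ha
  · rw [← h'.2.1, ← hg, hy, hc0]
  · rintro ⟨x, rfl⟩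
    apply hc
    rw [hg, hf, hc0]
    exact (h'.2.1 _).2 ⟨a x, rfl⟩

theorem ShortExact.of_ladder_bijective {α β γ α' β' γ' : Type*} [Zero γ] [Zero γ']
    {f : α → β} {g : β → γ} {f' : α' → β'} {g' : β' → γ'} {a : α → α'} {b : β → β'}
    {c : γ → γ'} (h' : ShortExact f' g') (hf : ∀ x, b (f x) = f' (a x))
    (hg : ∀ y, c (g y) = g' (b y)) (ha : Bijective a) (hb : Bijective b) (hc : Bijective c)
    (hc0 : c 0 = 0) : ShortExact f g := by
  refine h'.of_pure_ladder hf hg ha.1 hc.1 hc0 ?_ ?_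
  · rintro y ⟨x', hx'⟩
    obtain ⟨x, rfl⟩ := ha.2 x'
    exact ⟨x, hb.1 (by rw [hf, hx'])⟩
  · rintro z ⟨y', hy'⟩
    obtain ⟨y, rfl⟩ := hb.2 y'
    exact ⟨y, hc.1 (by rw [hg, hy'])⟩

end Function

open Function

section

variable {𝒞 : Type*} [Category* 𝒞] {A B Z : 𝒞} {i : A ⟶ B} {p : B ⟶ Z}

theorem bijective_app_of_isLimit_fan {ι : Type v} {M : ι → 𝒞 ⥤ AddCommGrpCat.{v}}
    {P : 𝒞 ⥤ AddCommGrpCat.{v}} {π : ∀ k, P ⟶ M k} (hP : IsLimit (Fan.mk P π)) (X : 𝒞) :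
    Bijective fun (x : P.obj X) k => (π k).app X x := by
  have hX := isLimitOfPreserves ((evaluation 𝒞 AddCommGrpCat.{v}).obj X) hP
  refine ⟨fun x y hxy => Concrete.isLimit_ext _ hX x y fun k => congrFun hxy k.as, fun m => ?_⟩
  let piCone : Cone (Discrete.functor M ⋙ (evaluation 𝒞 AddCommGrpCat.{v}).obj X) :=
    ⟨.of (∀ k, (M k).obj X), Discrete.natTrans fun k =>
      AddCommGrpCat.ofHom (Pi.evalAddMonoidHom (fun k => (M k).obj X) k.as)⟩
  exact ⟨hX.lift piCone m, funext fun k => ConcreteCategory.congr_hom (hX.fac piCone ⟨k⟩) m⟩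

theorem shortExact_map_of_isLimit_fan {ι : Type v} {M : ι → 𝒞 ⥤ AddCommGrpCat.{v}}
    {P : 𝒞 ⥤ AddCommGrpCat.{v}} {π : ∀ k, P ⟶ M k} (hP : IsLimit (Fan.mk P π))
    (hM : ∀ k, ShortExact ((M k).map i) ((M k).map p)) : ShortExact (P.map i) (P.map p) :=
  (ShortExact.piMap hM).of_ladder_bijective
    (fun x => funext fun k => NatTrans.naturality_apply (π k) i x)
    (fun y => funext fun k => NatTrans.naturality_apply (π k) p y)
    (bijective_app_of_isLimit_fan hP A) (bijective_app_of_isLimit_fan hP B)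
    (bijective_app_of_isLimit_fan hP Z) (funext fun _ => map_zero _)

section Filtered

variable {J : Type v} [SmallCategory J] [IsFiltered J] {F : J ⥤ 𝒞 ⥤ AddCommGrpCat.{v}}
  {c : Cocone F} (hc : IsColimit c)
include hc

theorem exists_app_eq_of_isColimit {X : 𝒞} (x : c.pt.obj X) :
    ∃ (j : J) (y : (F.obj j).obj X), (c.ι.app j).app X y = x :=
  Concrete.isColimit_exists_rep _ (isColimitOfPreserves ((evaluation 𝒞 _).obj X) hc) x

theorem exists_map_app_eq_zero_of_isColimit {X : 𝒞} {j : J} {y : (F.obj j).obj X}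
    (hy : (c.ι.app j).app X y = 0) : ∃ (k : J) (f : j ⟶ k), (F.map f).app X y = 0 := by
  obtain ⟨k, f, g, hfg⟩ := Concrete.isColimit_exists_of_rep_eq _
    (isColimitOfPreserves ((evaluation 𝒞 _).obj X) hc) y (0 : (F.obj j).obj X)
    (hy.trans (map_zero ((c.ι.app j).app X).hom).symm)
  exact ⟨k, f, hfg.trans (map_zero ((F.map g).app X).hom)⟩

theorem shortExact_map_of_isColimit (hF : ∀ j, ShortExact ((F.obj j).map i) ((F.obj j).map p)) :
    ShortExact (c.pt.map i) (c.pt.map p) := by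
  refine ⟨(injective_iff_map_eq_zero (c.pt.map i).hom).2 fun x hx => ?_,
    fun y => ⟨fun hy => ?_, ?_⟩, fun z => ?_⟩
  · obtain ⟨j, x, rfl⟩ := exists_app_eq_of_isColimit hc x
    rw [← NatTrans.naturality_apply] at hx
    obtain ⟨k, f, hf⟩ := exists_map_app_eq_zero_of_isColimit hc hx
    rw [NatTrans.naturality_apply] at hf
    rw [← c.w f, NatTrans.comp_app, ConcreteCategory.comp_apply,
      (hF k).1 (hf.trans (map_zero _).symm), map_zero]
  · obtain ⟨j, y, rfl⟩ := exists_app_eq_of_isColimit hc y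
    rw [← NatTrans.naturality_apply] at hy
    obtain ⟨k, f, hf⟩ := exists_map_app_eq_zero_of_isColimit hc hy
    rw [NatTrans.naturality_apply] at hf
    obtain ⟨x, hx⟩ := ((hF k).2.1 _).1 hf
    refine ⟨(c.ι.app k).app A x, ?_⟩
    rw [← NatTrans.naturality_apply, hx, ← c.w f]
    rfl
  · rintro ⟨x, rfl⟩
    obtain ⟨j, x, rfl⟩ := exists_app_eq_of_isColimit hc x
    rw [← NatTrans.naturality_apply, ← NatTrans.naturality_apply, ((hF j).2.1 _).2 ⟨x, rfl⟩,
      map_zero]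
  · obtain ⟨j, z, rfl⟩ := exists_app_eq_of_isColimit hc z
    obtain ⟨y, rfl⟩ := (hF j).2.2 z
    exact ⟨(c.ι.app j).app B y, (NatTrans.naturality_apply _ _ _).symm⟩

end Filtered

end

theorem shortExact_map_of_isPureMono {𝒞 : Type u} [SmallCategory 𝒞]
    {M N : 𝒞 ⥤ AddCommGrpCat.{u}} {h : M ⟶ N} (hh : IsPureMono h) {A B Z : 𝒞} {i : A ⟶ B}
    {p : B ⟶ Z} (hN : ShortExact (N.map i) (N.map p)) : ShortExact (M.map i) (M.map p) := by
  have happ : ∀ X, Injective (h.app X) := fun X =>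
    (AddCommGrpCat.mono_iff_injective _).1 ((NatTrans.mono_iff_mono_app h).1 hh.1 X)
  exact hN.of_pure_ladder (NatTrans.naturality_apply h i) (NatTrans.naturality_apply h p)
    (happ A) (happ Z) (map_zero _) (hh.2 i) (hh.2 p)

/-- for a skeletally small exact category `X` (an additive category
equipped with a class `E` of admissible short exact sequences, i.e. kernel-cokernel pairs),
the subcategory `Ex-X` of `Mod-X` consisting of those additive functors `M` sending every
admissible short exact sequence `0 → A → B → C → 0` to an exact sequence
`0 → M(A) → M(B) → M(C) → 0` of abelian groups is definable. -/
theorem ex_definable (E : Set (AdmissibleSES C)) :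
    IsDefinable {M : C ⥤ AddCommGrpCat.{u} | M.Additive ∧ ∀ S ∈ E,
      Function.Injective (M.map S.i) ∧ Function.Exact (M.map S.i) (M.map S.p) ∧
      Function.Surjective (M.map S.p)} := by
  refine ⟨fun M hM => hM.1, ?_, ?_, ?_⟩
  · rintro ι M hM P hP π ⟨hlim⟩
    exact ⟨hP, fun S hS => shortExact_map_of_isLimit_fan hlim fun k => (hM k).2 S hS⟩
  · intro J _ _ F hF c hc hcol
    exact ⟨hc, fun S hS => shortExact_map_of_isColimit hcol fun j => (hF j).2 S hS⟩
  · rintro M N h hM hh ⟨-, hN⟩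
    exact ⟨hM, fun S hS => shortExact_map_of_isPureMono hh (hN S hS)⟩
end

section
/- Let X be a skeletally small exact category. Then the subcategory Lex-X of Mod-X consisting of left exact additive functors M : X → Ab (those sending each admissible short exact sequence 0 → A → B → C to an exact sequence 0 → M(A) → M(B) → M(C)) is definable, i.e. closed under products, direct limits and pure subobjects. -/
open CategoryTheory CategoryTheory.Limits

universe u

variable {C : Type u} [SmallCategory C] [Preadditive C]

/-!
Left exactness of `M` on `A ⟶ B ⟶ D` is an elementwise condition on `M A → M B → M D`. It is
reflected along any family of natural transformations `M ⟶ N i` that is jointly injective and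
along which an element of `M B` lies in the image of `M A` as soon as all its images do; the
projections of a product and a pure monomorphism are such families. Filtered colimits of abelian
groups are computed elementwise, with equalities witnessed at some stage of the diagram, so
injectivity and exactness pass to the colimit.
-/

namespace CategoryTheory

universe v

variable {X : Type*} [Category X]

def Functor.IsLeftExactOn (M : X ⥤ AddCommGrpCat.{v}) {A B D : X} (f : A ⟶ B) (g : B ⟶ D) :
    Prop :=
  Function.Injective (M.map f) ∧ Function.Exact (M.map f) (M.map g)

theorem Functor.IsLeftExactOn.of_jointlyInjective {ι : Type*} {M : X ⥤ AddCommGrpCat.{v}}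
    {N : ι → X ⥤ AddCommGrpCat.{v}} (φ : ∀ i, M ⟶ N i)
    (hφ : ∀ (Y : X) (x y : M.obj Y), (∀ i, (φ i).app Y x = (φ i).app Y y) → x = y)
    {A B D : X} {f : A ⟶ B} {g : B ⟶ D} (hN : ∀ i, (N i).IsLeftExactOn f g)
    (hlift : ∀ b : M.obj B, (∀ i, (φ i).app B b ∈ Set.range ((N i).map f)) →
      b ∈ Set.range (M.map f)) :
    M.IsLeftExactOn f g := by
  refine ⟨fun x y hxy => hφ A x y fun i => (hN i).1 ?_,
    fun b => ⟨fun hb => hlift b fun i => ?_, ?_⟩⟩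
  · rw [← NatTrans.naturality_apply, hxy, NatTrans.naturality_apply]
  · refine ((hN i).2 _).1 ?_
    rw [← NatTrans.naturality_apply, hb, map_zero]
  · rintro ⟨a, rfl⟩
    refine hφ D _ _ fun i => ?_
    rw [map_zero, NatTrans.naturality_apply, NatTrans.naturality_apply]
    exact (hN i).2.apply_apply_eq_zero _

section Products

variable {ι : Type v} {M : ι → X ⥤ AddCommGrpCat.{v}} {P : X ⥤ AddCommGrpCat.{v}}
  {π : ∀ i, P ⟶ M i}

noncomputable def isLimitFanMkApp (hπ : IsLimit (Fan.mk P π)) (Y : X) :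
    IsLimit (Fan.mk (P.obj Y) fun i => (π i).app Y) :=
  Fan.isLimitMapConeEquiv _ _ _ (isLimitOfPreserves ((evaluation X _).obj Y) hπ)

theorem ext_of_isLimit_fan (hπ : IsLimit (Fan.mk P π)) {Y : X} {x y : P.obj Y}
    (h : ∀ i, (π i).app Y x = (π i).app Y y) : x = y :=
  Concrete.isLimit_ext _ (isLimitFanMkApp hπ Y) x y fun ⟨i⟩ => h i

theorem exists_app_eq_of_isLimit_fan (hπ : IsLimit (Fan.mk P π)) {Y : X}
    (a : ∀ i, (M i).obj Y) : ∃ x : P.obj Y, ∀ i, (π i).app Y x = a i := by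
  have hforget := isLimitOfPreserves (forget AddCommGrpCat) (isLimitFanMkApp hπ Y)
  obtain ⟨x, hx, -⟩ := (Types.isLimit_iff _).mp ⟨hforget⟩ (fun j => a j.as) <| by
    rintro ⟨i⟩ ⟨j⟩ f
    obtain rfl : i = j := Discrete.eq_of_hom f
    simp [Subsingleton.elim f (𝟙 _)]
  exact ⟨x, fun i => hx ⟨i⟩⟩

theorem Functor.IsLeftExactOn.of_isLimit_fan (hπ : IsLimit (Fan.mk P π)) {A B D : X}
    {f : A ⟶ B} {g : B ⟶ D} (hM : ∀ i, (M i).IsLeftExactOn f g) : P.IsLeftExactOn f g := by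
  refine Functor.IsLeftExactOn.of_jointlyInjective π (fun _ _ _ => ext_of_isLimit_fan hπ) hM
    fun b hb => ?_
  choose a ha using hb
  obtain ⟨x, hx⟩ := exists_app_eq_of_isLimit_fan hπ a
  exact ⟨x, ext_of_isLimit_fan hπ fun i => by rw [NatTrans.naturality_apply, hx, ha]⟩

end Products

section FilteredColimits

variable {J : Type v} [SmallCategory J] {F : J ⥤ X ⥤ AddCommGrpCat.{v}} {c : Cocone F}

theorem Limits.Cocone.w_app_apply (c : Cocone F) {Y : X} {i k : J} (s : i ⟶ k)
    (x : (F.obj i).obj Y) : (c.ι.app k).app Y ((F.map s).app Y x) = (c.ι.app i).app Y x := by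
  rw [← NatTrans.comp_app_apply, c.w]

variable [IsFiltered J]

theorem exists_app_eq_of_isColimit (hc : IsColimit c) {Y : X} (x : c.pt.obj Y) :
    ∃ (j : J) (y : (F.obj j).obj Y), (c.ι.app j).app Y y = x :=
  Concrete.isColimit_exists_rep _ (isColimitOfPreserves ((evaluation X _).obj Y) hc) x

theorem app_eq_app_iff_of_isColimit (hc : IsColimit c) {Y : X} {i j : J}
    (x : (F.obj i).obj Y) (y : (F.obj j).obj Y) :
    (c.ι.app i).app Y x = (c.ι.app j).app Y y ↔
      ∃ (k : J) (s : i ⟶ k) (t : j ⟶ k), (F.map s).app Y x = (F.map t).app Y y :=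
  Concrete.isColimit_rep_eq_iff_exists _ (isColimitOfPreserves ((evaluation X _).obj Y) hc) x y

theorem Functor.IsLeftExactOn.of_isColimit (hc : IsColimit c) {A B D : X}
    {f : A ⟶ B} {g : B ⟶ D} (hF : ∀ j, (F.obj j).IsLeftExactOn f g) :
    c.pt.IsLeftExactOn f g := by
  refine ⟨fun x y hxy => ?_, fun b => ⟨fun hb => ?_, ?_⟩⟩
  · obtain ⟨i, x, rfl⟩ := exists_app_eq_of_isColimit hc x
    obtain ⟨j, y, rfl⟩ := exists_app_eq_of_isColimit hc y
    simp only [← NatTrans.naturality_apply] at hxy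
    obtain ⟨k, s, t, hst⟩ := (app_eq_app_iff_of_isColimit hc _ _).1 hxy
    simp only [NatTrans.naturality_apply] at hst
    rw [← c.w_app_apply s, ← c.w_app_apply t, (hF k).1 hst]
  · obtain ⟨i, b, rfl⟩ := exists_app_eq_of_isColimit hc b
    have hb0 : (c.ι.app i).app D ((F.obj i).map g b) = (c.ι.app i).app D 0 := by
      rw [NatTrans.naturality_apply]
      exact hb.trans (map_zero _).symm
    obtain ⟨k, s, t, hst⟩ := (app_eq_app_iff_of_isColimit hc _ _).1 hb0
    rw [map_zero, NatTrans.naturality_apply] at hst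
    obtain ⟨a, ha⟩ := ((hF k).2 _).1 hst
    exact ⟨(c.ι.app k).app A a, by rw [← NatTrans.naturality_apply, ha, c.w_app_apply]⟩
  · rintro ⟨a, rfl⟩
    obtain ⟨i, a, rfl⟩ := exists_app_eq_of_isColimit hc a
    rw [← NatTrans.naturality_apply, ← NatTrans.naturality_apply,
      (hF i).2.apply_apply_eq_zero, map_zero]

end FilteredColimits

omit [Preadditive C] in
theorem Functor.IsLeftExactOn.of_isPureMono {M N : C ⥤ AddCommGrpCat.{u}} {h : M ⟶ N}
    (hh : IsPureMono h) {A B D : C} {f : A ⟶ B} {g : B ⟶ D} (hN : N.IsLeftExactOn f g) :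
    M.IsLeftExactOn f g :=
  IsLeftExactOn.of_jointlyInjective (ι := Unit) (fun _ => h)
    (fun Y _ _ hxy => (AddCommGrpCat.mono_iff_injective _).1
      ((NatTrans.mono_iff_mono_app h).1 hh.1 Y) (hxy ()))
    (fun _ => hN) fun b hb => hh.2 f b (hb ())

end CategoryTheory

/-- for a skeletally small exact category `X` (an additive category
equipped with a class `E` of admissible short exact sequences, i.e. kernel-cokernel pairs),
the subcategory `Lex-X` of `Mod-X` consisting of the left exact additive functors `M` —
those sending every admissible short exact sequence `0 → A → B → C` to an exact sequence
`0 → M(A) → M(B) → M(C)` of abelian groups — is definable, i.e. closed under products,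
direct limits and pure subobjects. -/
theorem lex_definable (E : Set (AdmissibleSES C)) :
    IsDefinable {M : C ⥤ AddCommGrpCat.{u} | M.Additive ∧ ∀ S ∈ E,
      Function.Injective (M.map S.i) ∧ Function.Exact (M.map S.i) (M.map S.p)} := by
  refine ⟨fun M hM => hM.1, ?_, ?_, ?_⟩
  · rintro ι M hM P hP π ⟨hπ⟩
    exact ⟨hP, fun S hS => Functor.IsLeftExactOn.of_isLimit_fan hπ fun i => (hM i).2 S hS⟩
  · rintro J _ _ F hF c hc_add hc
    exact ⟨hc_add, fun S hS => Functor.IsLeftExactOn.of_isColimit hc fun j => (hF j).2 S hS⟩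
  · rintro M N h hM hh ⟨-, hN⟩
    exact ⟨hM, fun S hS => Functor.IsLeftExactOn.of_isPureMono hh (hN S hS)⟩
end
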